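/- The Bernstein operators satisfy the commutation relation S_n S_m = − S_{m−1} S_{n+1} for all integers m, n; in particular S_m S_{m+1} = 0. -/

import Mathlib

open MvPolynomial

noncomputable section

/-- The ring of symmetric functions over `ℚ`, presented as `ℚ[p₁, p₂, p₃, …]`,
where the variable `k` stands for the power sum `p_{k+1}`. -/
abbrev SymQ : Type := MvPolynomial ℕ ℚ

/-- The power sum `p_n` (for `n ≥ 1`). -/
def psumQ (n : ℕ) : SymQ := X (n - 1)

/-- The complete homogeneous symmetric functions `h_n`, defined via Newton's identity
`n·h_n = ∑_{i=1}^n p_i h_{n-i}`. -/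
def hfun : ℕ → SymQ
  | 0 => 1
  | (n + 1) =>
      C (((n : ℚ) + 1)⁻¹) *
        ∑ i ∈ Finset.range (n + 1), psumQ (i + 1) * hfun (n - i)
  decreasing_by exact Nat.lt_succ_of_le (Nat.sub_le n i)

/-- Laurent series in `z` with symmetric function coefficients. -/
abbrev LS : Type := LaurentSeries SymQ

/-- The series `Ω[zX] = ∑_{n ≥ 0} h_n[X] zⁿ`. -/
def OmegaS : LS := HahnSeries.ofPowerSeries ℤ SymQ (PowerSeries.mk hfun)

/-- The plethystic substitution `P[X] ↦ P[X − 1/z]`, determined on power sums by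
`p_k ↦ p_k − z^{−k}`. -/
def substS : SymQ →+* LS :=
  eval₂Hom ((HahnSeries.C : SymQ →+* LS).comp (MvPolynomial.C : ℚ →+* SymQ))
    (fun k => HahnSeries.C (X k : SymQ) - HahnSeries.single (-(k + 1 : ℤ)) 1)

/-- The Bernstein operator `S_m`: the coefficient of `z^m` in
`S(z)P[X] = P[X − 1/z]·Ω[zX]`. -/
def Sop (m : ℤ) (P : SymQ) : SymQ := (substS P * OmegaS).coeff m

def hZ (n : ℤ) : SymQ := if 0 ≤ n then hfun n.toNat else 0
lemma hZ_ofNat (n : ℕ) : hZ (n : ℤ) = hfun n := by simp [hZ]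
lemma hZ_neg {n : ℤ} (h : n < 0) : hZ n = 0 := by simp [hZ, not_le.2 h]
lemma substS_C (c : ℚ) : substS (C c) = HahnSeries.C (C c) := by
  simp only [substS, eval₂Hom_C, RingHom.coe_comp, Function.comp_apply]
lemma substS_X (k : ℕ) :
    substS (X k) = HahnSeries.C (X k : SymQ) - HahnSeries.single (-(k + 1 : ℤ)) 1 := by
  simp [substS]
lemma newton (n : ℕ) :
    C ((n : ℚ) + 1) * hfun (n + 1)
      = ∑ i ∈ Finset.range (n + 1), psumQ (i + 1) * hfun (n - i) := by
  rw [show hfun (n+1) = C (((n : ℚ) + 1)⁻¹) *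
        ∑ i ∈ Finset.range (n + 1), psumQ (i + 1) * hfun (n - i) by rw [hfun]]
  rw [← mul_assoc, ← map_mul, mul_inv_cancel₀ (by positivity), map_one, one_mul]

lemma newton' (n : ℕ) :
    ∑ i ∈ Finset.range (n+1), (X i : SymQ) * hZ ((n:ℤ) - i - 1) = C (n:ℚ) * hfun n := by
  cases n with
  | zero => simp [hZ_neg]
  | succ m =>
    rw [Finset.sum_range_succ]
    have h1 : hZ (((m+1 : ℕ):ℤ) - (m+1 : ℕ) - 1) = 0 := by
      apply hZ_neg; push_cast; omega
    rw [h1, mul_zero, add_zero]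
    have h2 : ∀ i ∈ Finset.range (m+1), (X i : SymQ) * hZ (((m+1:ℕ):ℤ) - i - 1)
        = psumQ (i+1) * hfun (m - i) := by
      intro i hi
      have hi' : i ≤ m := Nat.lt_succ_iff.mp (Finset.mem_range.mp hi)
      have : (((m+1:ℕ)):ℤ) - i - 1 = ((m - i : ℕ) : ℤ) := by
        rw [Nat.cast_sub hi']; push_cast; ring
      rw [this, hZ_ofNat]
      simp [psumQ]
    rw [Finset.sum_congr rfl h2, ← newton m]
    push_cast
    ring

lemma substS_hfun (n : ℕ) : substS (hfun n) =
    HahnSeries.C (hfun n) - HahnSeries.C (hZ ((n:ℤ) - 1)) * HahnSeries.single (-1 : ℤ) 1 := by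
  induction n using Nat.strong_induction_on with
  | _ n IH =>
  match n with
  | 0 =>
    have h0 : hfun 0 = 1 := by rw [hfun]
    rw [h0, hZ_neg (by norm_num : ((0:ℕ):ℤ) - 1 < 0)]
    simp
  | Nat.succ n =>
    have hc : (HahnSeries.C (C ((n:ℚ)+1) : SymQ) : LS) ≠ 0 := by
      apply HahnSeries.C_ne_zero
      simp only [ne_eq, MvPolynomial.C_eq_zero]
      positivity
    apply mul_left_cancel₀ hc
    set z1 : LS := HahnSeries.single (-1 : ℤ) 1 with hz1
    set f : ℕ → LS :=
      fun j => HahnSeries.C (hZ ((n:ℤ) - j)) * HahnSeries.single (-((j:ℤ)+1)) 1 with hf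
    have lhs1 : HahnSeries.C (C ((n:ℚ)+1) : SymQ) * substS (hfun (n+1))
        = ∑ i ∈ Finset.range (n+1), substS (psumQ (i+1) * hfun (n-i)) := by
      rw [← substS_C, ← map_mul, newton n, map_sum]
    have expand : ∀ i ∈ Finset.range (n+1),
        substS (psumQ (i+1) * hfun (n-i)) =
        (HahnSeries.C ((X i : SymQ) * hfun (n - i))
          - HahnSeries.C ((X i : SymQ) * hZ ((n:ℤ) - i - 1)) * z1)
          - f i + f (i+1) := by
      intro i hi
      have hin : i ≤ n := Nat.lt_succ_iff.mp (Finset.mem_range.mp hi)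
      have hcast : ((n - i : ℕ) : ℤ) = (n:ℤ) - i := Nat.cast_sub hin
      have hps : psumQ (i+1) = X i := by simp [psumQ]
      have hIH := IH (n - i) (by omega)
      have h1 : hfun (n - i) = hZ ((n:ℤ) - i) := by rw [← hcast, hZ_ofNat]
      have h2 : ((n - i : ℕ) : ℤ) - 1 = (n:ℤ) - i - 1 := by rw [hcast]
      rw [map_mul, hps, substS_X, hIH, h2]
      have hs : HahnSeries.single (-((i:ℤ) + 1)) (1 : SymQ) * z1
          = HahnSeries.single (-(((i+1:ℕ):ℤ)+1)) 1 := by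
        rw [hz1, HahnSeries.single_mul_single, one_mul,
          show (-((i:ℤ)+1) + -1) = -(((i+1:ℕ):ℤ)+1) by push_cast; ring]
      simp only [hf]
      have h3 : ((n:ℤ) - ((i+1:ℕ):ℤ)) = (n:ℤ) - i - 1 := by push_cast; ring
      rw [h3, ← hs, map_mul, map_mul, h1]
      ring
    rw [lhs1, Finset.sum_congr rfl expand]
    rw [Finset.sum_add_distrib, Finset.sum_sub_distrib, Finset.sum_sub_distrib,
      ← Finset.sum_mul, ← map_sum, ← map_sum]
    have P1 : ∑ i ∈ Finset.range (n+1), (X i : SymQ) * hfun (n - i)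
        = C ((n:ℚ)+1) * hfun (n+1) := by
      rw [newton n]
      apply Finset.sum_congr rfl
      intro i _; simp [psumQ]
    have P2 : ∑ i ∈ Finset.range (n+1), (X i : SymQ) * hZ ((n:ℤ) - i - 1)
        = C (n:ℚ) * hfun n := newton' n
    have P3 : ∑ i ∈ Finset.range (n+1), f (i+1)
        = ∑ i ∈ Finset.range (n+1), f i + f (n+1) - f 0 := by
      have h5 := Finset.sum_range_succ' f (n+1)
      have h4 := Finset.sum_range_succ f (n+1)
      linear_combination h4 - h5
    have hfn1 : f (n+1) = 0 := by
      simp only [hf]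
      rw [hZ_neg (by push_cast; omega : (n:ℤ) - ((n+1:ℕ):ℤ) < 0), map_zero, zero_mul]
    have hf0 : f 0 = HahnSeries.C (hfun n) * z1 := by
      simp only [hf, Nat.cast_zero, sub_zero, hZ_ofNat, hz1]
      norm_num
    have h6 : hZ (((n+1:ℕ):ℤ) - 1) = hfun n := by
      rw [show ((n+1:ℕ):ℤ) - 1 = (n:ℤ) by push_cast; ring, hZ_ofNat]
    have h7 : (HahnSeries.C (C ((n:ℚ)+1) : SymQ) : LS) = HahnSeries.C (C (n:ℚ) : SymQ) + 1 := by
      rw [map_add, map_one, map_add, map_one]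
    rw [P1, P2, P3, hfn1, hf0, h6, map_mul, map_mul, h7]
    ring

lemma Omega_coeff (n : ℤ) : OmegaS.coeff n = hZ n := by
  rcases le_or_gt 0 n with h | h
  · obtain ⟨m, rfl⟩ := Int.eq_ofNat_of_zero_le h
    rw [OmegaS, HahnSeries.ofPowerSeries_apply_coeff, hZ_ofNat, PowerSeries.coeff_mk]
  · rw [hZ_neg h, OmegaS, HahnSeries.ofPowerSeries_apply]
    apply HahnSeries.embDomain_notin_range
    rintro ⟨m, hm⟩
    have : (m : ℤ) = n := hm
    omega

lemma C_mul_coeff (r : SymQ) (x : LS) (a : ℤ) :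
    (HahnSeries.C r * x).coeff a = r * x.coeff a := by
  rw [HahnSeries.C_mul_eq_smul, HahnSeries.coeff_smul]
  rfl

lemma mul_single_coeff (x : LS) (g a : ℤ) :
    (x * HahnSeries.single g (1 : SymQ)).coeff a = x.coeff (a - g) := by
  have := HahnSeries.coeff_mul_single_add (r := (1 : SymQ)) (x := x) (a := a - g) (b := g)
  rw [sub_add_cancel] at this
  rw [this, mul_one]

lemma substS_hZ (j : ℤ) : substS (hZ j) =
    HahnSeries.C (hZ j) - HahnSeries.C (hZ (j - 1)) * HahnSeries.single (-1 : ℤ) 1 := by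
  rcases le_or_gt 0 j with h | h
  · obtain ⟨m, rfl⟩ := Int.eq_ofNat_of_zero_le h
    rw [hZ_ofNat, substS_hfun]
  · rw [hZ_neg h, hZ_neg (by omega : j - 1 < 0)]
    simp

lemma substS_support_finite (P : SymQ) : (substS P).support.Finite := by
  induction P using MvPolynomial.induction_on with
  | C c =>
    rw [substS_C]
    exact (Set.finite_singleton (0:ℤ)).subset HahnSeries.support_single_subset
  | add p q hp hq =>
    rw [map_add]
    exact (hp.union hq).subset (HahnSeries.support_add_subset _ _)
  | mul_X p k hp =>
    rw [map_mul, substS_X]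
    have h2 : (HahnSeries.C (X k : SymQ)
        - HahnSeries.single (-(k + 1 : ℤ)) 1).support.Finite := by
      apply Set.Finite.subset (Set.finite_union.2
        ⟨Set.finite_singleton (0:ℤ), Set.finite_singleton (-(k+1:ℤ))⟩)
      rw [sub_eq_add_neg]
      refine (HahnSeries.support_add_subset _ _).trans ?_
      apply Set.union_subset_union
      · exact HahnSeries.support_single_subset
      · rw [HahnSeries.support_neg]
        exact HahnSeries.support_single_subset
    exact (hp.add h2).subset HahnSeries.support_mul_subset

lemma coeff_finsum (x : LS) (S : Finset ℤ) (hS : x.support ⊆ S) :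
    x = ∑ b ∈ S, HahnSeries.single b (x.coeff b) := by
  ext c
  rw [show (∑ b ∈ S, HahnSeries.single b (x.coeff b)).coeff c
      = ∑ b ∈ S, (HahnSeries.single b (x.coeff b)).coeff c from
    map_sum (HahnSeries.coeff.addMonoidHom c) _ S]
  rw [Finset.sum_eq_single c]
  · rw [HahnSeries.coeff_single_same]
  · intro b _ hb
    exact HahnSeries.coeff_single_of_ne hb.symm
  · intro hc
    rw [HahnSeries.coeff_single_same]
    by_contra hne
    exact hc (hS hne)

lemma coeff_mul_fin (x y : LS) (S : Finset ℤ) (hS : x.support ⊆ S) (a : ℤ) :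
    (x * y).coeff a = ∑ b ∈ S, x.coeff b * y.coeff (a - b) := by
  conv_lhs => rw [coeff_finsum x S hS]
  rw [Finset.sum_mul,
    show (∑ b ∈ S, HahnSeries.single b (x.coeff b) * y).coeff a
      = ∑ b ∈ S, (HahnSeries.single b (x.coeff b) * y).coeff a from
    map_sum (HahnSeries.coeff.addMonoidHom a) _ S]
  apply Finset.sum_congr rfl
  intro b _
  have := HahnSeries.coeff_single_mul_add (r := x.coeff b) (x := y) (a := a - b) (b := b)
  rw [sub_add_cancel] at this
  rw [this]

lemma single_mul_coeff' (x : LS) (g a : ℤ) :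
    (HahnSeries.single g (1 : SymQ) * x).coeff a = x.coeff (a - g) := by
  have := HahnSeries.coeff_single_mul_add (r := (1 : SymQ)) (x := x) (a := a - g) (b := g)
  rw [sub_add_cancel] at this
  rw [this, one_mul]

/-- double coefficient of the double substitution -/
def QQ (P : SymQ) (a b : ℤ) : SymQ := (substS ((substS P).coeff a)).coeff b

lemma Sp_coeff (p : SymQ) (k : ℕ) (a : ℤ) :
    (substS (p * X k)).coeff a
      = (X k : SymQ) * (substS p).coeff a - (substS p).coeff (a + (k + 1)) := by
  rw [map_mul, substS_X, mul_sub, HahnSeries.coeff_sub,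
    mul_comm (substS p) (HahnSeries.C _), C_mul_coeff, mul_single_coeff,
    show a - (-((k:ℤ)+1)) = a + ((k:ℤ)+1) by ring]

lemma QQ_C (c : ℚ) (a b : ℤ) :
    QQ (C c) a b = if a = 0 then (if b = 0 then C c else 0) else 0 := by
  unfold QQ
  rw [substS_C]
  by_cases ha : a = 0
  · subst ha
    rw [show (HahnSeries.C (C c : SymQ)).coeff (0:ℤ) = C c from HahnSeries.coeff_single_same 0 _,
      substS_C]
    by_cases hb : b = 0
    · subst hb
      simp [HahnSeries.coeff_single_same]
    · simp [hb, HahnSeries.coeff_single_of_ne hb]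
  · rw [show (HahnSeries.C (C c : SymQ)).coeff a = 0 from HahnSeries.coeff_single_of_ne ha]
    simp [ha]

lemma QQ_add (p q : SymQ) (a b : ℤ) : QQ (p + q) a b = QQ p a b + QQ q a b := by
  unfold QQ
  rw [map_add, HahnSeries.coeff_add, map_add, HahnSeries.coeff_add]

lemma QQ_mulX (p : SymQ) (k : ℕ) (a b : ℤ) :
    QQ (p * X k) a b
      = (X k : SymQ) * QQ p a b - QQ p a (b + (k + 1)) - QQ p (a + (k + 1)) b := by
  unfold QQ
  rw [Sp_coeff, map_sub, map_mul, substS_X, HahnSeries.coeff_sub, sub_mul,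
    HahnSeries.coeff_sub, C_mul_coeff, single_mul_coeff',
    show b - (-((k:ℤ)+1)) = b + ((k:ℤ)+1) by ring]

lemma QQ_symm (P : SymQ) : ∀ a b : ℤ, QQ P a b = QQ P b a := by
  induction P using MvPolynomial.induction_on with
  | C c =>
    intro a b
    rw [QQ_C, QQ_C]
    by_cases ha : a = 0 <;> by_cases hb : b = 0 <;> simp [ha, hb]
  | add p q hp hq =>
    intro a b
    rw [QQ_add, QQ_add, hp, hq]
  | mul_X p k hp =>
    intro a b
    rw [QQ_mulX, QQ_mulX, hp a b, hp a (b + (k+1)), hp (a + (k+1)) b]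
    ring

/-- the symmetric double sum -/
def Wf (P : SymQ) (S : Finset ℤ) (m n : ℤ) : SymQ :=
  ∑ a ∈ S, ∑ b ∈ S, QQ P a b * (hZ (m - a) * hZ (n - b))

lemma Wf_symm (P : SymQ) (S : Finset ℤ) (m n : ℤ) : Wf P S m n = Wf P S n m := by
  unfold Wf
  rw [Finset.sum_comm]
  refine Finset.sum_congr rfl fun a _ => Finset.sum_congr rfl fun b _ => ?_
  rw [QQ_symm]
  ring

lemma Sop_Sop (P : SymQ) (S : Finset ℤ) (hS1 : (substS P).support ⊆ S)
    (hS2 : ∀ a ∈ S, (substS ((substS P).coeff a)).support ⊆ S) (m n : ℤ) :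
    Sop n (Sop m P) = Wf P S m n - Wf P S (m-1) (n+1) := by
  have e1 : Sop m P = ∑ a ∈ S, (substS P).coeff a * hZ (m - a) := by
    rw [Sop, coeff_mul_fin _ _ S hS1]
    exact Finset.sum_congr rfl fun a _ => by rw [Omega_coeff]
  have e2 : substS (Sop m P)
      = ∑ a ∈ S, substS ((substS P).coeff a) * substS (hZ (m - a)) := by
    rw [e1, map_sum]
    exact Finset.sum_congr rfl fun a _ => map_mul _ _ _
  have e3 : Sop n (Sop m P)
      = ∑ a ∈ S, (substS ((substS P).coeff a) * substS (hZ (m - a)) * OmegaS).coeff n := by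
    rw [Sop, e2, Finset.sum_mul]
    exact map_sum (HahnSeries.coeff.addMonoidHom n) _ S
  have e4 : ∀ a ∈ S, (substS ((substS P).coeff a) * substS (hZ (m - a)) * OmegaS).coeff n
      = (∑ b ∈ S, QQ P a b * (hZ (m - a) * hZ (n - b)))
        - ∑ b ∈ S, QQ P a b * (hZ (m - 1 - a) * hZ (n + 1 - b)) := by
    intro a ha
    set B := substS ((substS P).coeff a) with hB
    have hBc : ∀ c : ℤ, (B * OmegaS).coeff c = ∑ b ∈ S, QQ P a b * hZ (c - b) := by
      intro c
      rw [coeff_mul_fin _ _ S (hS2 a ha)]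
      exact Finset.sum_congr rfl fun b _ => by simp only [QQ]; rw [Omega_coeff]
    rw [substS_hZ]
    have rearrange : B * (HahnSeries.C (hZ (m - a))
          - HahnSeries.C (hZ (m - a - 1)) * HahnSeries.single (-1 : ℤ) 1) * OmegaS
        = HahnSeries.C (hZ (m - a)) * (B * OmegaS)
          - HahnSeries.C (hZ (m - a - 1)) * ((B * OmegaS) * HahnSeries.single (-1 : ℤ) 1) := by
      ring
    rw [rearrange, HahnSeries.coeff_sub, C_mul_coeff, C_mul_coeff, mul_single_coeff,
      hBc, hBc, Finset.mul_sum, Finset.mul_sum, show n - (-1 : ℤ) = n + 1 by ring]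
    congr 1
    · exact Finset.sum_congr rfl fun b _ => by ring
    · refine Finset.sum_congr rfl fun b _ => ?_
      rw [show m - a - 1 = m - 1 - a by ring]
      ring
  rw [e3, Finset.sum_congr rfl e4, Finset.sum_sub_distrib]
  rfl

lemma bern_first (m n : ℤ) (P : SymQ) :
    Sop n (Sop m P) = - Sop (m - 1) (Sop (n + 1) P) := by
  classical
  set s := (substS_support_finite P).toFinset with hs
  set S := s ∪ s.biUnion
    (fun a => (substS_support_finite ((substS P).coeff a)).toFinset) with hSdef
  have hS1 : (substS P).support ⊆ S := by
    intro x hx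
    apply Finset.mem_coe.mpr
    apply Finset.mem_union_left
    exact (Set.Finite.mem_toFinset _).mpr hx
  have hS2 : ∀ a ∈ S, (substS ((substS P).coeff a)).support ⊆ S := by
    intro a _ b hb
    have hne : (substS P).coeff a ≠ 0 := by
      intro h0
      rw [h0, map_zero] at hb
      exact hb rfl
    have has : a ∈ s := (Set.Finite.mem_toFinset _).mpr hne
    apply Finset.mem_coe.mpr
    apply Finset.mem_union_right
    exact Finset.mem_biUnion.mpr ⟨a, has, (Set.Finite.mem_toFinset _).mpr hb⟩
  rw [Sop_Sop P S hS1 hS2 m n, Sop_Sop P S hS1 hS2 (n+1) (m-1),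
    show n + 1 - 1 = n by ring, show m - 1 + 1 = m by ring,
    Wf_symm P S m n, Wf_symm P S (m-1) (n+1)]
  ring


/-- The Bernstein operators satisfy `S_n S_m = −S_{m−1} S_{n+1}` for all integers `m, n`;
in particular `S_m S_{m+1} = 0`. -/
theorem bernstein_commutation :
    (∀ (m n : ℤ) (P : SymQ), Sop n (Sop m P) = - Sop (m - 1) (Sop (n + 1) P)) ∧
    (∀ (m : ℤ) (P : SymQ), Sop m (Sop (m + 1) P) = 0) := by
  refine ⟨bern_first, fun m P => ?_⟩
  have h := bern_first (m+1) m P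
  rw [show m + 1 - 1 = m by ring] at h
  have h3 : Sop m (Sop (m + 1) P) + Sop m (Sop (m + 1) P) = 0 := by
    linear_combination h
  exact add_self_eq_zero.mp h3

end
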